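/- Let n ≥ 2r. Every maximal left-compressed intersecting family 𝒜 ⊆ [2r]^(r) extends uniquely to a maximal left-compressed intersecting family ℬ ⊆ [n]^(r) with ℬ ∩ [2r]^(r) = 𝒜. -/

import Mathlib

/-!
The extension is forced to be the family of all `r`-subsets of `[n]` that meet every member
of `𝒜`. The key point is that compressions push any member `A` of a left-compressed family
on `[n]` into `[2r]` while keeping it disjoint from a given `r`-set `B`: as long as `A` has an
element beyond `2r`, fewer than `2r` points of `[2r]` are covered by `A ∪ B`, so there is a
free slot to compress into. Hence two disjoint sets meeting all of `𝒜` would yield such a set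
inside `[2r]`, which lies in `𝒜` by maximality. Any maximal extension is contained in this
family, so equals it.
-/

open Finset

/-- The ij-compression of a finite set: replace j by i if possible. -/
def comp (i j : ℕ) (A : Finset ℕ) : Finset ℕ :=
  if j ∈ A ∧ i ∉ A then insert i (A.erase j) else A

/-- The ij-compression of a family of sets. -/
def compFam (i j : ℕ) (𝒜 : Finset (Finset ℕ)) : Finset (Finset ℕ) :=
  (𝒜.filter (fun A => comp i j A ∈ 𝒜)) ∪
    ((𝒜.filter (fun A => comp i j A ∉ 𝒜)).image (comp i j))

/-- A family is intersecting if any two members meet. -/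
def IsIntersecting (𝒜 : Finset (Finset ℕ)) : Prop :=
  ∀ A ∈ 𝒜, ∀ B ∈ 𝒜, (A ∩ B).Nonempty

/-- A family is left-compressed if it is invariant under all ij-compressions, i < j. -/
def LeftCompressed (𝒜 : Finset (Finset ℕ)) : Prop :=
  ∀ i j : ℕ, 1 ≤ i → i < j → compFam i j 𝒜 = 𝒜

/-- The compression order: same size and the k-th smallest element of `A` is at most
the k-th smallest element of `B`. -/
def domLE (A B : Finset ℕ) : Prop :=
  A.card = B.card ∧ ∀ (k : ℕ) (a b : ℕ), (A.sort (· ≤ ·))[k]? = some a →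
    (B.sort (· ≤ ·))[k]? = some b → a ≤ b

/-- `A ≺ G` : `A` is generated by `G`, i.e. `|G| ≤ |A|` and the k-th smallest element
of `A` is at most the k-th smallest element of `G` for `k ≤ |G|`. -/
def prec (A G : Finset ℕ) : Prop :=
  G.card ≤ A.card ∧ ∀ (k : ℕ) (a g : ℕ), (A.sort (· ≤ ·))[k]? = some a →
    (G.sort (· ≤ ·))[k]? = some g → a ≤ g

/-- The r-element subsets of [n] = {1, ..., n}. -/
def uniformOn (n r : ℕ) : Finset (Finset ℕ) := (Icc 1 n).powersetCard r

/-- The family ⟨𝒢⟩_r^n generated by 𝒢 under inclusion. -/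
def genSub (r n : ℕ) (𝒢 : Finset (Finset ℕ)) : Finset (Finset ℕ) :=
  (uniformOn n r).filter (fun A => ∃ G ∈ 𝒢, G ⊆ A)

open Classical in
/-- The family ⟨𝒢⟩_r^n generated by 𝒢 under ≺. -/
noncomputable def genP (r n : ℕ) (𝒢 : Finset (Finset ℕ)) : Finset (Finset ℕ) :=
  (uniformOn n r).filter (fun A => ∃ G ∈ 𝒢, prec A G)

/-- ℱ(X) : the members of ℱ meeting X. -/
def hitting (ℱ : Finset (Finset ℕ)) (X : Finset ℕ) : Finset (Finset ℕ) :=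
  ℱ.filter (fun A => (A ∩ X).Nonempty)

/-- The star at 1 in [n]^(r). -/
def star (n r : ℕ) : Finset (Finset ℕ) := (uniformOn n r).filter (fun A => 1 ∈ A)

/-- A maximal left-compressed intersecting subfamily of [n]^(r). -/
def MaxLCI (n r : ℕ) (𝒜 : Finset (Finset ℕ)) : Prop :=
  𝒜 ⊆ uniformOn n r ∧ LeftCompressed 𝒜 ∧ IsIntersecting 𝒜 ∧
    ∀ B ∈ uniformOn n r, B ∉ 𝒜 → ¬ IsIntersecting (insert B 𝒜)

/-- X is good for n and r. -/
def IsGood (n r : ℕ) (X : Finset ℕ) : Prop :=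
  ∀ 𝒜 ⊆ uniformOn n r, LeftCompressed 𝒜 → IsIntersecting 𝒜 →
    (hitting 𝒜 X).card ≤ (hitting (star n r) X).card

lemma mem_uniformOn {n r : ℕ} {A : Finset ℕ} :
    A ∈ uniformOn n r ↔ A ⊆ Icc 1 n ∧ A.card = r := by
  simp [uniformOn, mem_powersetCard]

lemma uniformOn_mono {m n : ℕ} (r : ℕ) (hmn : m ≤ n) : uniformOn m r ⊆ uniformOn n r :=
  powersetCard_mono (Icc_subset_Icc_right hmn)

lemma IsIntersecting.mono {𝒜 ℬ : Finset (Finset ℕ)} (hℬ : IsIntersecting ℬ) (h : 𝒜 ⊆ ℬ) :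
    IsIntersecting 𝒜 :=
  fun A hA B hB => hℬ A (h hA) B (h hB)

lemma IsIntersecting.nonempty {𝒜 : Finset (Finset ℕ)} (h : IsIntersecting 𝒜) {A : Finset ℕ}
    (hA : A ∈ 𝒜) : A.Nonempty := by
  simpa using h A hA A hA

lemma isIntersecting_insert {𝒜 : Finset (Finset ℕ)} {B : Finset ℕ} :
    IsIntersecting (insert B 𝒜) ↔
      B.Nonempty ∧ (∀ A ∈ 𝒜, (A ∩ B).Nonempty) ∧ IsIntersecting 𝒜 := by
  simp only [IsIntersecting, forall_mem_insert, inter_self, inter_comm B]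
  grind

lemma MaxLCI.mem_of_forall_inter_nonempty {n r : ℕ} {𝒜 : Finset (Finset ℕ)} (h : MaxLCI n r 𝒜)
    {B : Finset ℕ} (hB : B ∈ uniformOn n r) (hBne : B.Nonempty)
    (hB𝒜 : ∀ A ∈ 𝒜, (A ∩ B).Nonempty) : B ∈ 𝒜 := by
  by_contra hB'
  exact h.2.2.2 B hB hB' (isIntersecting_insert.2 ⟨hBne, hB𝒜, h.2.2.1⟩)

lemma MaxLCI.eq_of_subset {n r : ℕ} {ℬ 𝒞 : Finset (Finset ℕ)} (h : MaxLCI n r ℬ)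
    (hℬ𝒞 : ℬ ⊆ 𝒞) (h𝒞 : 𝒞 ⊆ uniformOn n r) (h𝒞i : IsIntersecting 𝒞) : ℬ = 𝒞 := by
  refine hℬ𝒞.antisymm fun B hB => ?_
  by_contra hBℬ
  exact h.2.2.2 B (h𝒞 hB) hBℬ (h𝒞i.mono (insert_subset hB hℬ𝒞))

lemma comp_of_mem_of_notMem {i j : ℕ} {A : Finset ℕ} (hj : j ∈ A) (hi : i ∉ A) :
    comp i j A = insert i (A.erase j) := by
  simp [comp, hj, hi]

lemma comp_eq_self_of_not {i j : ℕ} {A : Finset ℕ} (h : ¬ (j ∈ A ∧ i ∉ A)) : comp i j A = A := by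
  simp [comp, h]

lemma card_insert_erase {i j : ℕ} {A : Finset ℕ} (hj : j ∈ A) (hi : i ∉ A) :
    (insert i (A.erase j)).card = A.card := by
  rw [card_insert_of_notMem fun h => hi (mem_of_mem_erase h), card_erase_add_one hj]

lemma card_comp (i j : ℕ) (A : Finset ℕ) : (comp i j A).card = A.card := by
  by_cases h : j ∈ A ∧ i ∉ A
  · rw [comp_of_mem_of_notMem h.1 h.2, card_insert_erase h.1 h.2]
  · rw [comp_eq_self_of_not h]

lemma comp_mem_uniformOn {n r i j : ℕ} (hi : 1 ≤ i) (hij : i < j) {A : Finset ℕ}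
    (hA : A ∈ uniformOn n r) : comp i j A ∈ uniformOn n r := by
  rw [mem_uniformOn] at hA ⊢
  refine ⟨?_, (card_comp i j A).trans hA.2⟩
  by_cases h : j ∈ A ∧ i ∉ A
  · have hjn := (mem_Icc.1 (hA.1 h.1)).2
    rw [comp_of_mem_of_notMem h.1 h.2]
    exact insert_subset (mem_Icc.2 ⟨hi, by omega⟩) ((erase_subset j A).trans hA.1)
  · rw [comp_eq_self_of_not h]
    exact hA.1

lemma leftCompressed_iff {𝒜 : Finset (Finset ℕ)} :
    LeftCompressed 𝒜 ↔ ∀ i j : ℕ, 1 ≤ i → i < j → ∀ A ∈ 𝒜, comp i j A ∈ 𝒜 := by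
  refine ⟨fun h i j hi hij A hA => ?_, fun h i j hi hij => ?_⟩
  · by_contra h'
    have hm : comp i j A ∈ compFam i j 𝒜 :=
      mem_union_right _ (mem_image_of_mem _ (mem_filter.2 ⟨hA, h'⟩))
    rw [h i j hi hij] at hm
    exact h' hm
  · rw [compFam, filter_true_of_mem (h i j hi hij), filter_false_of_mem fun A hA h' =>
      h' (h i j hi hij A hA), image_empty, union_empty]

lemma LeftCompressed.comp_mem {𝒜 : Finset (Finset ℕ)} (h : LeftCompressed 𝒜) {i j : ℕ}
    (hi : 1 ≤ i) (hij : i < j) {A : Finset ℕ} (hA : A ∈ 𝒜) : comp i j A ∈ 𝒜 :=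
  leftCompressed_iff.1 h i j hi hij A hA

/-- If `B` meets every member of a left-compressed family, so does every compression of `B`:
a member `A` missing `comp i j B` would have to meet `B` in `j` alone, and then `comp i j A`
would miss `B`. -/
lemma LeftCompressed.inter_comp_nonempty {𝒜 : Finset (Finset ℕ)} (h𝒜 : LeftCompressed 𝒜)
    {B : Finset ℕ} (hB : ∀ A ∈ 𝒜, (A ∩ B).Nonempty) {i j : ℕ} (hi : 1 ≤ i) (hij : i < j)
    {A : Finset ℕ} (hA : A ∈ 𝒜) : (A ∩ comp i j B).Nonempty := by
  by_cases hact : j ∈ B ∧ i ∉ B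
  swap
  · rw [comp_eq_self_of_not hact]
    exact hB A hA
  rw [comp_of_mem_of_notMem hact.1 hact.2, ← not_disjoint_iff_nonempty_inter,
    disjoint_insert_right]
  rintro ⟨hiA, hAB⟩
  have hA_sub : ∀ x ∈ A, x ∈ B → x = j := fun x hxA hxB => by
    by_contra hxj
    exact disjoint_left.1 hAB hxA (mem_erase.2 ⟨hxj, hxB⟩)
  obtain ⟨x, hx⟩ := hB A hA
  obtain ⟨hxA, hxB⟩ := mem_inter.1 hx
  have hjA : j ∈ A := hA_sub x hxA hxB ▸ hxA
  obtain ⟨y, hy⟩ := hB _ (h𝒜.comp_mem hi hij hA)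
  rw [comp_of_mem_of_notMem hjA hiA, mem_inter, mem_insert, mem_erase] at hy
  obtain ⟨rfl | ⟨hyj, hyA⟩, hyB⟩ := hy
  · exact hact.2 hyB
  · exact hyj (hA_sub y hyA hyB)

lemma exists_mem_Icc_notMem_notMem {m : ℕ} {A B : Finset ℕ}
    (hcard : A.card + (B ∩ Icc 1 m).card ≤ m) (hA : ¬ A ⊆ Icc 1 m) :
    ∃ i ∈ Icc 1 m, i ∉ A ∧ i ∉ B := by
  have hAm : (A ∩ Icc 1 m).card < A.card :=
    card_lt_card (inter_subset_left.ssubset_of_not_subset fun h => hA (h.trans inter_subset_right))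
  have hcov : ((A ∪ B) ∩ Icc 1 m).card < (Icc 1 m).card :=
    calc ((A ∪ B) ∩ Icc 1 m).card ≤ (A ∩ Icc 1 m).card + (B ∩ Icc 1 m).card := by
          rw [union_inter_distrib_right]
          exact card_union_le _ _
      _ < m := by omega
      _ = (Icc 1 m).card := by simp
  obtain ⟨i, hi, hi'⟩ := exists_mem_notMem_of_card_lt_card hcov
  simp only [mem_inter, mem_union, hi, and_true, not_or] at hi'
  exact ⟨i, hi, hi'⟩

lemma LeftCompressed.exists_mem_subset_Icc_disjoint {𝒞 : Finset (Finset ℕ)}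
    (h𝒞 : LeftCompressed 𝒞) {m : ℕ} {B : Finset ℕ} :
    ∀ {A : Finset ℕ}, A ∈ 𝒞 → 0 ∉ A → Disjoint A B → A.card + (B ∩ Icc 1 m).card ≤ m →
      ∃ A' ∈ 𝒞, A' ⊆ Icc 1 m ∧ Disjoint A' B := by
  intro A
  induction hk : (A \ Icc 1 m).card generalizing A with
  | zero =>
    intro hA _ hAB _
    exact ⟨A, hA, sdiff_eq_empty_iff_subset.1 (card_eq_zero.1 hk), hAB⟩
  | succ k ih =>
    intro hA hA0 hAB hcard
    obtain ⟨j, hj⟩ := card_pos.1 (by omega : 0 < (A \ Icc 1 m).card)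
    obtain ⟨hjA, hjm⟩ := mem_sdiff.1 hj
    obtain ⟨i, him, hiA, hiB⟩ := exists_mem_Icc_notMem_notMem hcard fun h => hjm (h hjA)
    have hi := mem_Icc.1 him
    have hij : i < j := by
      by_contra! hji
      exact hjm (mem_Icc.2 ⟨Nat.pos_of_ne_zero fun h => hA0 (h ▸ hjA), hji.trans hi.2⟩)
    have hcomp := comp_of_mem_of_notMem hjA hiA
    refine ih ?_ (h𝒞.comp_mem hi.1 hij hA) ?_ ?_ ?_
    · rw [hcomp, insert_sdiff_of_mem _ him, erase_sdiff_comm, card_erase_of_mem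
        (mem_sdiff.2 ⟨hjA, hjm⟩), hk, Nat.add_sub_cancel]
    · rw [hcomp, mem_insert, mem_erase, not_or]
      exact ⟨by omega, fun h => hA0 h.2⟩
    · rw [hcomp]
      exact disjoint_insert_left.2 ⟨hiB, hAB.mono_left (erase_subset j A)⟩
    · rwa [card_comp]

/-- Nonemptiness only matters for `r = 0`, where it makes the family empty, hence intersecting. -/
def transversals (n r : ℕ) (𝒜 : Finset (Finset ℕ)) : Finset (Finset ℕ) :=
  (uniformOn n r).filter fun B => B.Nonempty ∧ ∀ A ∈ 𝒜, (A ∩ B).Nonempty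

section transversals

variable {n r : ℕ} {𝒜 : Finset (Finset ℕ)}

lemma mem_transversals {B : Finset ℕ} :
    B ∈ transversals n r 𝒜 ↔ B ∈ uniformOn n r ∧ B.Nonempty ∧ ∀ A ∈ 𝒜, (A ∩ B).Nonempty :=
  mem_filter

lemma transversals_subset_uniformOn : transversals n r 𝒜 ⊆ uniformOn n r := filter_subset _ _

lemma IsIntersecting.subset_transversals {ℬ : Finset (Finset ℕ)} (h : IsIntersecting ℬ)
    (hℬ : ℬ ⊆ uniformOn n r) (h𝒜ℬ : 𝒜 ⊆ ℬ) : ℬ ⊆ transversals n r 𝒜 :=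
  fun B hB => mem_transversals.2 ⟨hℬ hB, h.nonempty hB, fun A hA => h A (h𝒜ℬ hA) B hB⟩

lemma LeftCompressed.transversals (h𝒜 : LeftCompressed 𝒜) :
    LeftCompressed (transversals n r 𝒜) := by
  refine leftCompressed_iff.2 fun i j hi hij B hB => ?_
  obtain ⟨hBu, hBne, hB𝒜⟩ := mem_transversals.1 hB
  refine mem_transversals.2 ⟨comp_mem_uniformOn hi hij hBu, ?_,
    fun A hA => h𝒜.inter_comp_nonempty hB𝒜 hi hij hA⟩
  rw [← card_pos, card_comp]
  exact card_pos.2 hBne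

lemma MaxLCI.subset_transversals {m : ℕ} (h : MaxLCI m r 𝒜) (hmn : m ≤ n) :
    𝒜 ⊆ transversals n r 𝒜 :=
  h.2.2.1.subset_transversals (h.1.trans (uniformOn_mono r hmn)) subset_rfl

lemma MaxLCI.transversals_inter_uniformOn {m : ℕ} (h : MaxLCI m r 𝒜) (hmn : m ≤ n) :
    transversals n r 𝒜 ∩ uniformOn m r = 𝒜 := by
  ext B
  refine ⟨fun hB => ?_, fun hB => mem_inter.2 ⟨h.subset_transversals hmn hB, h.1 hB⟩⟩
  obtain ⟨hBt, hBm⟩ := mem_inter.1 hB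
  obtain ⟨-, hBne, hB𝒜⟩ := mem_transversals.1 hBt
  exact h.mem_of_forall_inter_nonempty hBm hBne hB𝒜

lemma MaxLCI.isIntersecting_transversals (h : MaxLCI (2 * r) r 𝒜) :
    IsIntersecting (transversals n r 𝒜) := by
  intro X hX Y hY
  rw [← not_disjoint_iff_nonempty_inter]
  intro hXY
  obtain ⟨hXn, hXr⟩ := mem_uniformOn.1 (transversals_subset_uniformOn hX)
  have hYr : (Y ∩ Icc 1 (2 * r)).card ≤ r :=
    (card_le_card inter_subset_left).trans (mem_uniformOn.1 (transversals_subset_uniformOn hY)).2.le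
  obtain ⟨A, hAt, hA2r, hAY⟩ := h.2.1.transversals.exists_mem_subset_Icc_disjoint (m := 2 * r)
    hX (fun h0 => by simpa using hXn h0) hXY (by omega)
  obtain ⟨hAu, hAne, hA𝒜⟩ := mem_transversals.1 hAt
  have hA : A ∈ 𝒜 :=
    h.mem_of_forall_inter_nonempty (mem_uniformOn.2 ⟨hA2r, (mem_uniformOn.1 hAu).2⟩) hAne hA𝒜
  exact not_disjoint_iff_nonempty_inter.2 ((mem_transversals.1 hY).2.2 A hA) hAY

lemma MaxLCI.maxLCI_transversals (h : MaxLCI (2 * r) r 𝒜) (hn : 2 * r ≤ n) :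
    MaxLCI n r (transversals n r 𝒜) := by
  refine ⟨transversals_subset_uniformOn, h.2.1.transversals, h.isIntersecting_transversals,
    fun B hB hBt hins => hBt ?_⟩
  obtain ⟨hBne, hBmeets, -⟩ := isIntersecting_insert.1 hins
  exact mem_transversals.2 ⟨hB, hBne, fun A hA => hBmeets A (h.subset_transversals hn hA)⟩

end transversals

theorem stmt6 (n r : ℕ) (hn : 2 * r ≤ n) (𝒜 : Finset (Finset ℕ))
    (h𝒜 : MaxLCI (2 * r) r 𝒜) :
    ∃! ℬ : Finset (Finset ℕ), MaxLCI n r ℬ ∧ ℬ ∩ uniformOn (2 * r) r = 𝒜 := by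
  refine ⟨transversals n r 𝒜, ⟨h𝒜.maxLCI_transversals hn, h𝒜.transversals_inter_uniformOn hn⟩, ?_⟩
  rintro ℬ ⟨hℬ, htrace⟩
  have hℬt : ℬ ⊆ transversals n r 𝒜 :=
    hℬ.2.2.1.subset_transversals hℬ.1 (htrace ▸ inter_subset_left)
  exact hℬ.eq_of_subset hℬt transversals_subset_uniformOn h𝒜.isIntersecting_transversals
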